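/- With the hypotheses of the main theorem on the Kummer curve Weierstrass semigroup, the set H = ⟨m,λ₀⟩ ∪ ⋃_{k=r}^{λ₀-1} B_k with B_k = {mk - k'λ₀ : 1 ≤ k' ≤ η_k} is a disjoint union, and its complement in ℕ₀ has cardinality ((m-1)(r-1) + r - ∑_{i=1}^r gcd(m,λ_i))/2. -/

import Mathlib

/-!
Since `gcd(m, λ₀) = 1`, every integer is uniquely `m K - c λ₀` with `0 ≤ K < λ₀`. Such an integer
lies in `⟨m, λ₀⟩` iff `c ≤ 0`, and in `B_k` iff `K = k` and `1 ≤ c ≤ η_k`; the `B_k` are therefore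
pairwise disjoint and disjoint from `⟨m, λ₀⟩`, and the gaps are the `m K - c λ₀` with `1 ≤ K < λ₀`
and `η'_K < c ≤ ⌊K m / λ₀⌋`, where `η'` is `etaExt`.

The key identity is `t ≤ η_k ↔ N(t) ≤ k` for `1 ≤ t ≤ m`, with `N(t) = ∑ᵢ ⌈t λᵢ / m⌉`
(`ceilDivSum`): a tuple `s` with `min ⌊sᵢ m / λᵢ⌋ ≥ t` is exactly one with `sᵢ ≥ ⌈t λᵢ / m⌉`.
Swapping the order of summation then gives `∑_K η'_K = ∑_{t=1}^{m-1} (λ₀ - N(t))`. The two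
remaining sums, `∑_K ⌊K m / λ₀⌋` and `∑_t ⌈t λᵢ / m⌉`, are evaluated by pairing `t` with `n - t`:
`⌊t a / n⌋ + ⌊(n - t) a / n⌋ = a - 1` and `⌈t a / n⌉ + ⌈(n - t) a / n⌉ = a + 1`, except for the
`gcd(n, a) - 1` values of `t` with `n ∣ t a`, where both sums are `a`.
-/

open Finset

/-- min over i < r of ⌊s i * m / lam i⌋ -/
noncomputable def kinf (m r : ℕ) (lam : ℕ → ℕ) (s : ℕ → ℕ) : ℕ :=
  sInf {w : ℕ | ∃ i, i < r ∧ w = s i * m / lam i}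

/-- η_k = max over tuples (s_1,…,s_r) with 1 ≤ s_i ≤ λ_i and ∑ s_i = k of min_i ⌊s_i m/λ_i⌋ -/
noncomputable def eta (m r : ℕ) (lam : ℕ → ℕ) (k : ℕ) : ℕ :=
  sSup {v : ℕ | ∃ s : ℕ → ℕ, (∀ i, i < r → 1 ≤ s i ∧ s i ≤ lam i) ∧
      (∑ i ∈ Finset.range r, s i) = k ∧ v = kinf m r lam s}

/-- extended η: 0 for k < r, η_k for r ≤ k < λ₀, m-1 for k ≥ λ₀ -/
noncomputable def etaExt (m r lam0 : ℕ) (lam : ℕ → ℕ) (k : ℕ) : ℕ :=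
  if k < r then 0 else if k < lam0 then eta m r lam k else m - 1

/-- ε_k = m k - λ₀ (η_k + 1) -/
noncomputable def eps (m r lam0 : ℕ) (lam : ℕ → ℕ) (k : ℕ) : ℤ :=
  (m : ℤ) * k - (lam0 : ℤ) * (etaExt m r lam0 lam k + 1)

def IsNumericalSemigroup (H : Set ℕ) : Prop :=
  0 ∈ H ∧ (∀ a ∈ H, ∀ b ∈ H, a + b ∈ H) ∧ {x : ℕ | x ∉ H}.Finite

namespace Nat

theorem div_add_div_add_ite_of_add_eq_mul {a b n L : ℕ} (hn : 0 < n) (h : a + b = L * n) :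
    a / n + b / n + (if n ∣ a then 0 else 1) = L := by
  have hL : (a + b) / n = L := by rw [h, Nat.mul_div_cancel _ hn]
  have hdvd : n ∣ a + b := ⟨L, by rw [h, mul_comm]⟩
  rw [Nat.add_div hn] at hL
  by_cases ha : n ∣ a
  · have hb := (Nat.dvd_add_right ha).mp hdvd
    rw [Nat.mod_eq_zero_of_dvd ha, Nat.mod_eq_zero_of_dvd hb, if_neg (by omega)] at hL
    rw [if_pos ha, hL]
  · rw [if_pos (le_mod_add_mod_of_dvd_add_of_not_dvd hdvd ha)] at hL
    rw [if_neg ha, hL]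

theorem ceilDiv_eq_div_add_ite {a n : ℕ} (hn : 0 < n) :
    a ⌈/⌉ n = a / n + if n ∣ a then 0 else 1 := by
  have h : n - 1 < n := by omega
  rw [ceilDiv_eq_add_pred_div, Nat.add_sub_assoc (by omega), Nat.add_div hn,
    Nat.div_eq_of_lt h, Nat.mod_eq_of_lt h]
  simp only [Nat.dvd_iff_mod_eq_zero]
  split_ifs <;> omega

theorem card_filter_dvd_mul_add_one {n : ℕ} (hn : 0 < n) (a : ℕ) :
    #{t ∈ Ico 1 n | n ∣ t * a} + 1 = n.gcd a := by
  obtain ⟨n', a', hcop, hn', ha'⟩ := Nat.exists_coprime n a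
  set g := n.gcd a
  have hg : 0 < g := Nat.gcd_pos_of_pos_left a hn
  have hdvd : ∀ t, n ∣ t * a ↔ n' ∣ t := fun t => by
    rw [hn', ha', ← mul_assoc, Nat.mul_dvd_mul_iff_right hg, hcop.dvd_mul_right]
  have hIoc : #{t ∈ Ioc 0 n | n' ∣ t} = g := by
    rw [Nat.Ioc_filter_dvd_card_eq_div, hn', Nat.mul_div_cancel_left _ (Nat.pos_of_ne_zero ?_)]
    rintro rfl
    omega
  rw [← hIoc, ← Finset.Icc_add_one_left_eq_Ioc, zero_add, ← Finset.Ico_insert_right (by omega),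
    filter_insert, if_pos ⟨g, by rw [hn', mul_comm]⟩, card_insert_of_notMem (by simp)]
  simp_rw [hdvd]

theorem ceilDiv_pos {a n : ℕ} (hn : 0 < n) (ha : 0 < a) : 0 < a ⌈/⌉ n :=
  lt_of_not_ge fun h => ha.ne' (by simpa using (ceilDiv_le_iff_le_mul hn).mp h)

theorem sum_ite_dvd_mul_add_gcd {n : ℕ} (hn : 0 < n) (a : ℕ) :
    ∑ t ∈ Ico 1 n, (if n ∣ t * a then 0 else 1) + n.gcd a = n := by
  have hsplit := card_filter_add_card_filter_not (s := Ico 1 n) (fun t => n ∣ t * a)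
  rw [card_filter, card_filter, Nat.card_Ico] at hsplit
  simp_rw [ite_not] at hsplit
  have := card_filter_dvd_mul_add_one hn a
  rw [card_filter] at this
  omega

theorem two_mul_sum_div_add {n : ℕ} (hn : 0 < n) (a : ℕ) :
    2 * ∑ t ∈ Ico 1 n, t * a / n + n = (n - 1) * a + n.gcd a := by
  have hreflect : ∑ t ∈ Ico 1 n, (n - t) * a / n = ∑ t ∈ Ico 1 n, t * a / n := by
    simpa using sum_Ico_reflect (fun t => t * a / n) 1 (le_succ n)
  have hpair : ∀ t ∈ Ico 1 n, t * a / n + (n - t) * a / n + (if n ∣ t * a then 0 else 1) = a :=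
    fun t ht => div_add_div_add_ite_of_add_eq_mul hn <| by
      rw [← add_mul, Nat.add_sub_cancel' (mem_Ico.mp ht).2.le, mul_comm]
  have hsum := sum_congr rfl hpair
  rw [sum_add_distrib, sum_add_distrib, hreflect, sum_const, Nat.card_Ico, smul_eq_mul] at hsum
  have := sum_ite_dvd_mul_add_gcd hn a
  omega

theorem two_mul_sum_ceilDiv_add {n : ℕ} (hn : 0 < n) (a : ℕ) :
    2 * ∑ t ∈ Ico 1 n, t * a ⌈/⌉ n + n.gcd a = (n - 1) * a + n := by
  simp_rw [ceilDiv_eq_div_add_ite hn, sum_add_distrib]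
  have := two_mul_sum_div_add hn a
  have := sum_ite_dvd_mul_add_gcd hn a
  omega

end Nat

theorem exists_le_le_sum_eq {r k : ℕ} {g h : ℕ → ℕ} (hgh : ∀ i < r, g i ≤ h i)
    (hg : ∑ i ∈ range r, g i ≤ k) (hh : k ≤ ∑ i ∈ range r, h i) :
    ∃ s : ℕ → ℕ, (∀ i < r, g i ≤ s i ∧ s i ≤ h i) ∧ ∑ i ∈ range r, s i = k := by
  induction r generalizing k with
  | zero => exact ⟨g, by simp, by rw [sum_range_zero] at hh ⊢; omega⟩
  | succ r ih =>
    rw [sum_range_succ] at hg hh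
    have hghr := hgh r (lt_add_one r)
    -- the least value of the last coordinate that the first `r` coordinates can make up for
    obtain ⟨x, hx⟩ : ∃ x, x = max (g r) (k - ∑ i ∈ range r, h i) := ⟨_, rfl⟩
    have hGH : ∑ i ∈ range r, g i ≤ ∑ i ∈ range r, h i :=
      sum_le_sum fun i hi => hgh i (by have := mem_range.mp hi; omega)
    obtain ⟨s, hs, hsum⟩ := ih (k := k - x) (fun i hi => hgh i (by omega)) (by omega) (by omega)
    refine ⟨Function.update s r x, fun i hi => ?_, ?_⟩
    · rcases (Nat.lt_succ_iff_lt_or_eq.mp hi) with hi | rfl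
      · rw [Function.update_of_ne hi.ne]
        exact hs i hi
      · rw [Function.update_self]
        omega
    · rw [sum_range_succ, Function.update_self,
        sum_congr rfl fun i hi => Function.update_of_ne (mem_range.mp hi).ne _ _, hsum]
      omega

def ceilDivSum (m r : ℕ) (lam : ℕ → ℕ) (t : ℕ) : ℕ := ∑ i ∈ range r, t * lam i ⌈/⌉ m

section Eta

variable {m r : ℕ} {lam : ℕ → ℕ}

theorem le_kinf_iff (hr : 0 < r) (hlam : ∀ i < r, 0 < lam i) {s : ℕ → ℕ} {t : ℕ} :
    t ≤ kinf m r lam s ↔ ∀ i < r, t * lam i ≤ s i * m := by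
  have hne : {w | ∃ i, i < r ∧ w = s i * m / lam i}.Nonempty := ⟨_, 0, hr, rfl⟩
  rw [kinf, le_csInf_iff' hne]
  constructor
  · intro h i hi
    exact (Nat.le_div_iff_mul_le (hlam i hi)).mp (h ⟨i, hi, rfl⟩)
  · rintro h _ ⟨i, hi, rfl⟩
    exact (Nat.le_div_iff_mul_le (hlam i hi)).mpr (h i hi)

theorem bddAbove_etaSet (hr : 0 < r) (k : ℕ) :
    BddAbove {v : ℕ | ∃ s : ℕ → ℕ, (∀ i, i < r → 1 ≤ s i ∧ s i ≤ lam i) ∧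
      (∑ i ∈ range r, s i) = k ∧ v = kinf m r lam s} := by
  refine ⟨m, ?_⟩
  rintro _ ⟨s, hs, -, rfl⟩
  calc kinf m r lam s ≤ s 0 * m / lam 0 := Nat.sInf_le ⟨0, hr, rfl⟩
    _ ≤ m := Nat.div_le_of_le_mul (Nat.mul_le_mul_right m (hs 0 hr).2)

theorem exists_eta_eq_kinf (hr : 0 < r) (hlam : ∀ i < r, 0 < lam i) {k : ℕ} (hk : r ≤ k)
    (hkl : k ≤ ∑ i ∈ range r, lam i) :
    ∃ s : ℕ → ℕ, (∀ i, i < r → 1 ≤ s i ∧ s i ≤ lam i) ∧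
      (∑ i ∈ range r, s i) = k ∧ eta m r lam k = kinf m r lam s := by
  obtain ⟨s, hs, hsum⟩ := exists_le_le_sum_eq (g := fun _ => 1) hlam (by simpa using hk) hkl
  refine Nat.sSup_mem ?_ (bddAbove_etaSet hr k)
  exact ⟨_, s, hs, hsum, rfl⟩

theorem le_eta_iff (hm : 0 < m) (hr : 0 < r) (hlam : ∀ i < r, 0 < lam i) {k t : ℕ}
    (hk : r ≤ k) (hkl : k ≤ ∑ i ∈ range r, lam i) (ht : 0 < t) (htm : t ≤ m) :
    t ≤ eta m r lam k ↔ ceilDivSum m r lam t ≤ k := by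
  constructor
  · intro hle
    obtain ⟨s, -, hsum, heq⟩ := exists_eta_eq_kinf (m := m) hr hlam hk hkl
    rw [heq, le_kinf_iff hr hlam] at hle
    rw [← hsum]
    refine sum_le_sum fun i hi => (ceilDiv_le_iff_le_mul hm).mpr ?_
    rw [mul_comm m]
    exact hle i (mem_range.mp hi)
  · intro hN
    have hceil : ∀ i < r, t * lam i ⌈/⌉ m ≤ lam i := fun i _ =>
      (ceilDiv_le_iff_le_mul hm).mpr (Nat.mul_le_mul_right _ htm)
    obtain ⟨s, hs, hsum⟩ := exists_le_le_sum_eq hceil hN hkl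
    have hts : ∀ i < r, t * lam i ≤ s i * m := fun i hi =>
      calc t * lam i ≤ m * (t * lam i ⌈/⌉ m) := le_smul_ceilDiv hm
        _ ≤ s i * m := by rw [mul_comm]; exact Nat.mul_le_mul_right m (hs i hi).1
    have hadm : ∀ i < r, 1 ≤ s i ∧ s i ≤ lam i := fun i hi =>
      ⟨(Nat.ceilDiv_pos hm (Nat.mul_pos ht (hlam i hi))).trans_le (hs i hi).1, (hs i hi).2⟩
    exact ((le_kinf_iff hr hlam).mpr hts).trans
      (le_csSup (bddAbove_etaSet hr k) ⟨s, hadm, hsum, rfl⟩)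

theorem r_le_ceilDivSum (hm : 0 < m) (hlam : ∀ i < r, 0 < lam i) {t : ℕ} (ht : 0 < t) :
    r ≤ ceilDivSum m r lam t :=
  calc r = ∑ i ∈ range r, 1 := by simp
    _ ≤ ceilDivSum m r lam t :=
      sum_le_sum fun i hi => Nat.ceilDiv_pos hm (Nat.mul_pos ht (hlam i (mem_range.mp hi)))

theorem ceilDivSum_le (hm : 0 < m) {t : ℕ} (ht : t ≤ m) :
    ceilDivSum m r lam t ≤ ∑ i ∈ range r, lam i :=
  sum_le_sum fun _ _ => (ceilDiv_le_iff_le_mul hm).mpr (Nat.mul_le_mul_right _ ht)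

theorem ceilDivSum_self (hm : 0 < m) : ceilDivSum m r lam m = ∑ i ∈ range r, lam i :=
  sum_congr rfl fun i _ => smul_ceilDiv hm (lam i)

theorem mul_sum_le_mul_ceilDivSum (hm : 0 < m) (t : ℕ) :
    t * ∑ i ∈ range r, lam i ≤ m * ceilDivSum m r lam t := by
  rw [mul_sum, ceilDivSum, mul_sum]
  exact sum_le_sum fun i _ => le_smul_ceilDiv hm

theorem two_mul_sum_ceilDivSum_add (hm : 0 < m) :
    2 * ∑ t ∈ Ico 1 m, ceilDivSum m r lam t + ∑ i ∈ range r, m.gcd (lam i)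
      = (m - 1) * ∑ i ∈ range r, lam i + r * m := by
  simp only [ceilDivSum]
  rw [sum_comm, mul_sum, ← sum_add_distrib,
    sum_congr rfl fun i _ => Nat.two_mul_sum_ceilDiv_add hm (lam i), sum_add_distrib, mul_sum,
    sum_const, card_range, smul_eq_mul]

theorem eta_lt (hm : 0 < m) (hr : 0 < r) (hlam : ∀ i < r, 0 < lam i) {k : ℕ} (hk : r ≤ k)
    (hkl : k < ∑ i ∈ range r, lam i) : eta m r lam k < m := by
  by_contra! h
  have := (le_eta_iff hm hr hlam hk hkl.le hm le_rfl).mp h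
  rw [ceilDivSum_self hm] at this
  omega

variable {lam0 : ℕ}

theorem filter_ceilDivSum_le_eq_Icc (hm : 0 < m) (hr : 0 < r) (hlam : ∀ i < r, 0 < lam i)
    (h0 : lam0 = ∑ i ∈ range r, lam i) {K : ℕ} (hK : K < lam0) :
    {t ∈ Ico 1 m | ceilDivSum m r lam t ≤ K} = Icc 1 (etaExt m r lam0 lam K) := by
  ext t
  simp only [mem_filter, mem_Ico, mem_Icc]
  by_cases hKr : K < r
  · rw [etaExt, if_pos hKr]
    constructor
    · rintro ⟨⟨ht, -⟩, hN⟩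
      have := r_le_ceilDivSum hm hlam ht
      omega
    · omega
  · rw [etaExt, if_neg hKr, if_pos hK]
    subst h0
    have heta := eta_lt hm hr hlam (not_lt.mp hKr) hK
    constructor
    · rintro ⟨⟨ht, htm⟩, hN⟩
      exact ⟨ht, (le_eta_iff hm hr hlam (not_lt.mp hKr) hK.le ht (by omega)).mpr hN⟩
    · rintro ⟨ht, hte⟩
      exact ⟨⟨ht, by omega⟩, (le_eta_iff hm hr hlam (not_lt.mp hKr) hK.le ht (by omega)).mp hte⟩

theorem etaExt_le_div (hm : 0 < m) (hr : 0 < r) (hlam : ∀ i < r, 0 < lam i)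
    (h0 : lam0 = ∑ i ∈ range r, lam i) {K : ℕ} (hK : K < lam0) :
    etaExt m r lam0 lam K ≤ K * m / lam0 := by
  rw [Nat.le_div_iff_mul_le (by omega)]
  obtain h | h := Nat.eq_zero_or_pos (etaExt m r lam0 lam K)
  · simp [h]
  have hmem : etaExt m r lam0 lam K ∈ Icc 1 (etaExt m r lam0 lam K) := mem_Icc.mpr ⟨h, le_rfl⟩
  rw [← filter_ceilDivSum_le_eq_Icc hm hr hlam h0 hK, mem_filter] at hmem
  have := mul_sum_le_mul_ceilDivSum (r := r) (lam := lam) hm (etaExt m r lam0 lam K)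
  rw [← h0] at this
  nlinarith [hmem.2]

theorem sum_etaExt (hm : 0 < m) (hr : 0 < r) (hlam : ∀ i < r, 0 < lam i)
    (h0 : lam0 = ∑ i ∈ range r, lam i) :
    ∑ K ∈ Ico 1 lam0, etaExt m r lam0 lam K = ∑ t ∈ Ico 1 m, (lam0 - ceilDivSum m r lam t) :=
  calc ∑ K ∈ Ico 1 lam0, etaExt m r lam0 lam K
      = ∑ K ∈ Ico 1 lam0, #{t ∈ Ico 1 m | ceilDivSum m r lam t ≤ K} :=
        sum_congr rfl fun K hK => by
          rw [filter_ceilDivSum_le_eq_Icc hm hr hlam h0 (mem_Ico.mp hK).2, Nat.card_Icc,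
            Nat.add_sub_cancel]
    _ = ∑ t ∈ Ico 1 m, #{K ∈ Ico 1 lam0 | ceilDivSum m r lam t ≤ K} := by
        simp only [card_filter]
        exact sum_comm
    _ = ∑ t ∈ Ico 1 m, (lam0 - ceilDivSum m r lam t) :=
        sum_congr rfl fun t ht => by
          have := r_le_ceilDivSum hm hlam (mem_Ico.mp ht).1
          rw [Ico_filter_le, Nat.card_Ico, max_eq_right (by omega)]

end Eta

def twoGenerated (m n : ℕ) : Set ℤ := {y | ∃ a b : ℕ, y = a * m + b * n}

section Representation

variable {m n : ℕ}

theorem exists_eq_mul_sub_mul (hn : 0 < n) (hmn : m.Coprime n) (y : ℤ) :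
    ∃ K < n, ∃ c : ℤ, y = m * K - c * n := by
  obtain ⟨u, v, huv⟩ := Nat.isCoprime_iff_coprime.mpr hmn
  have hn' : (0 : ℤ) < n := by exact_mod_cast hn
  have hK : (((y * u % n).toNat : ℕ) : ℤ) = y * u % n :=
    Int.toNat_of_nonneg (Int.emod_nonneg _ hn'.ne')
  refine ⟨(y * u % n).toNat, by have := Int.emod_lt_of_pos (y * u) hn'; omega,
    -(m * (y * u / n) + y * v), ?_⟩
  rw [hK]
  linear_combination (-y) * huv - m * Int.emod_add_mul_ediv (y * u) n

theorem eq_of_mul_sub_mul_eq (hmn : m.Coprime n) {K₁ K₂ : ℕ} {c₁ c₂ : ℤ} (hK₁ : K₁ < n)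
    (hK₂ : K₂ < n) (h : (m : ℤ) * K₁ - c₁ * n = m * K₂ - c₂ * n) : K₁ = K₂ ∧ c₁ = c₂ := by
  have hdvd : (n : ℤ) ∣ K₁ - K₂ :=
    (Nat.isCoprime_iff_coprime.mpr hmn).symm.dvd_of_dvd_mul_left
      ⟨c₁ - c₂, by linear_combination h⟩
  obtain rfl : K₁ = K₂ := by
    have := Int.eq_zero_of_abs_lt_dvd hdvd (by rw [abs_lt]; omega)
    omega
  exact ⟨rfl, mul_right_cancel₀ (by omega : (n : ℤ) ≠ 0) (by linarith)⟩

theorem mul_sub_mul_mem_twoGenerated_iff (hmn : m.Coprime n) {K : ℕ} (hK : K < n) {c : ℤ} :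
    (m : ℤ) * K - c * n ∈ twoGenerated m n ↔ c ≤ 0 := by
  constructor
  · rintro ⟨a, b, hab⟩
    have ha : (a : ℤ) = (a % n : ℕ) + n * (a / n : ℕ) := by
      exact_mod_cast (Nat.mod_add_div a n).symm
    obtain ⟨-, rfl⟩ := eq_of_mul_sub_mul_eq hmn hK (Nat.mod_lt a (by omega))
      (c₂ := -(b + m * (a / n : ℕ))) (by rw [hab]; linear_combination (m : ℤ) * ha)
    exact neg_nonpos.mpr (by positivity)
  · intro hc
    exact ⟨K, (-c).toNat, by rw [Int.toNat_of_nonneg (by omega)]; ring⟩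

end Representation

/-- The set `B_k`. -/
def etaBlock (m r lam0 : ℕ) (lam : ℕ → ℕ) (k : ℕ) : Set ℤ :=
  {y | ∃ k' : ℕ, 1 ≤ k' ∧ k' ≤ eta m r lam k ∧ y = (m : ℤ) * k - (k' : ℤ) * lam0}

/-- The set `H`. -/
def weierstrassSet (m r lam0 : ℕ) (lam : ℕ → ℕ) : Set ℤ :=
  {y | y ∈ twoGenerated m lam0 ∨ ∃ k, r ≤ k ∧ k ≤ lam0 - 1 ∧ y ∈ etaBlock m r lam0 lam k}

noncomputable def gapFinset (m r lam0 : ℕ) (lam : ℕ → ℕ) : Finset ℕ :=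
  ((Ico 1 lam0).sigma fun K => Ioc (etaExt m r lam0 lam K) (K * m / lam0)).image
    fun p => p.1 * m - p.2 * lam0

section Gaps

variable {m r lam0 : ℕ} {lam : ℕ → ℕ}

theorem mul_sub_mul_mem_etaBlock_iff (hco : m.Coprime lam0) {K k : ℕ} (hK : K < lam0)
    (hk : k < lam0) {c : ℤ} :
    (m : ℤ) * K - c * lam0 ∈ etaBlock m r lam0 lam k ↔ K = k ∧ 1 ≤ c ∧ c ≤ eta m r lam k := by
  constructor
  · rintro ⟨k', h1, h2, h⟩
    obtain ⟨rfl, rfl⟩ := eq_of_mul_sub_mul_eq hco hK hk h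
    exact ⟨rfl, by exact_mod_cast h1, by exact_mod_cast h2⟩
  · rintro ⟨rfl, h1, h2⟩
    exact ⟨c.toNat, by omega, by omega, by rw [Int.toNat_of_nonneg (by omega)]⟩

theorem mul_sub_mul_mem_weierstrassSet_iff (hco : m.Coprime lam0) {K : ℕ} (hK : K < lam0)
    {c : ℤ} :
    (m : ℤ) * K - c * lam0 ∈ weierstrassSet m r lam0 lam ↔ c ≤ etaExt m r lam0 lam K := by
  have hblock : (∃ k, r ≤ k ∧ k ≤ lam0 - 1 ∧ (m : ℤ) * K - c * lam0 ∈ etaBlock m r lam0 lam k) ↔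
      r ≤ K ∧ 1 ≤ c ∧ c ≤ eta m r lam K := by
    constructor
    · rintro ⟨k, hrk, hk, hmem⟩
      obtain ⟨rfl, hc⟩ := (mul_sub_mul_mem_etaBlock_iff hco hK (by omega)).mp hmem
      exact ⟨hrk, hc⟩
    · rintro ⟨hrK, hc⟩
      exact ⟨K, hrK, by omega, (mul_sub_mul_mem_etaBlock_iff hco hK hK).mpr ⟨rfl, hc⟩⟩
  rw [weierstrassSet, Set.mem_ofPred_eq, mul_sub_mul_mem_twoGenerated_iff hco hK, hblock, etaExt]
  split_ifs <;> omega

theorem coe_gapFinset (hco : m.Coprime lam0) (hl : 0 < lam0) :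
    (gapFinset m r lam0 lam : Set ℕ) = {x : ℕ | (x : ℤ) ∉ weierstrassSet m r lam0 lam} := by
  ext x
  simp only [gapFinset, coe_image, coe_sigma, Set.mem_image, Set.mem_sigma_iff, mem_coe, mem_Ico,
    mem_Ioc, Set.mem_ofPred_eq, Sigma.exists]
  constructor
  · rintro ⟨K, c, ⟨⟨-, hK⟩, hc, hcK⟩, rfl⟩
    have hle : c * lam0 ≤ K * m := (Nat.le_div_iff_mul_le hl).mp hcK
    have hx : ((K * m - c * lam0 : ℕ) : ℤ) = m * K - c * lam0 := by
      push_cast [Nat.cast_sub hle]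
      ring
    rw [hx, mul_sub_mul_mem_weierstrassSet_iff hco hK]
    exact_mod_cast hc.not_ge
  · intro hx
    obtain ⟨K, hK, c, hxc⟩ := exists_eq_mul_sub_mul hl hco x
    rw [hxc, mul_sub_mul_mem_weierstrassSet_iff hco hK, not_le] at hx
    obtain ⟨c, rfl⟩ : ∃ c' : ℕ, c = c' := ⟨c.toNat, (Int.toNat_of_nonneg (by omega)).symm⟩
    have hle : c * lam0 ≤ K * m := by
      have : (0 : ℤ) ≤ x := by positivity
      exact_mod_cast (by linarith : (c : ℤ) * lam0 ≤ K * m)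
    have hK1 : 1 ≤ K := Nat.pos_of_ne_zero fun h => by
      subst h
      have : 1 ≤ c := by exact_mod_cast (by omega : (1 : ℤ) ≤ c)
      nlinarith
    refine ⟨K, c, ⟨⟨hK1, hK⟩, by exact_mod_cast hx, (Nat.le_div_iff_mul_le hl).mpr hle⟩, ?_⟩
    zify [hle]
    linarith

theorem two_mul_card_gapFinset (hm : 0 < m) (hr : 0 < r) (hlam : ∀ i < r, 0 < lam i)
    (h0 : lam0 = ∑ i ∈ range r, lam i) (hco : m.Coprime lam0) :
    2 * (#(gapFinset m r lam0 lam) : ℤ) =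
      ((m : ℤ) - 1) * ((r : ℤ) - 1) + r - ∑ i ∈ range r, (m.gcd (lam i) : ℤ) := by
  have hl : 0 < lam0 :=
    h0 ▸ sum_pos (fun i hi => hlam i (mem_range.mp hi)) (nonempty_range_iff.mpr hr.ne')
  have hinj : Set.InjOn (fun p : (_ : ℕ) × ℕ => p.1 * m - p.2 * lam0)
      ↑((Ico 1 lam0).sigma fun K => Ioc (etaExt m r lam0 lam K) (K * m / lam0)) := by
    rintro ⟨K₁, c₁⟩ h₁ ⟨K₂, c₂⟩ h₂ h
    simp only [coe_sigma, Set.mem_sigma_iff, mem_coe, mem_Ico, mem_Ioc] at h₁ h₂ h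
    have hle₁ := (Nat.le_div_iff_mul_le hl).mp h₁.2.2
    have hle₂ := (Nat.le_div_iff_mul_le hl).mp h₂.2.2
    zify [hle₁, hle₂] at h
    obtain ⟨rfl, hc⟩ := eq_of_mul_sub_mul_eq hco h₁.1.2 h₂.1.2 (c₁ := c₁) (c₂ := c₂)
      (by linear_combination h)
    rw [Nat.cast_inj.mp hc]
  have hcard : #(gapFinset m r lam0 lam) + ∑ K ∈ Ico 1 lam0, etaExt m r lam0 lam K =
      ∑ K ∈ Ico 1 lam0, K * m / lam0 := by
    rw [gapFinset, card_image_of_injOn hinj, card_sigma, ← sum_add_distrib]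
    exact sum_congr rfl fun K hK => by
      rw [Nat.card_Ioc, Nat.sub_add_cancel (etaExt_le_div hm hr hlam h0 (mem_Ico.mp hK).2)]
  have hfloor := Nat.two_mul_sum_div_add hl m
  rw [Nat.gcd_comm, hco] at hfloor
  have hceil := two_mul_sum_ceilDivSum_add (r := r) (lam := lam) hm
  rw [← h0] at hceil
  have hN : ∑ t ∈ Ico 1 m, (lam0 - ceilDivSum m r lam t) + ∑ t ∈ Ico 1 m, ceilDivSum m r lam t
      = (m - 1) * lam0 := by
    rw [← sum_add_distrib, sum_congr rfl fun t ht => Nat.sub_add_cancel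
      (h0 ▸ ceilDivSum_le hm (mem_Ico.mp ht).2.le), sum_const, Nat.card_Ico, smul_eq_mul]
  rw [sum_etaExt hm hr hlam h0] at hcard
  zify [hl, hm] at hcard hfloor hceil hN
  linear_combination 2 * hcard + hfloor - 2 * hN + hceil

end Gaps

theorem stmt18_general (m r : ℕ) (lam : ℕ → ℕ) (hm : 2 ≤ m)
    (hlam : ∀ i, i < r → 1 ≤ lam i ∧ lam i < m) (lam0 : ℕ)
    (h0 : lam0 = ∑ i ∈ Finset.range r, lam i) (hco : Nat.gcd m lam0 = 1) :
    (∀ k : ℕ, r ≤ k → k ≤ lam0 - 1 →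
        Disjoint {y : ℤ | ∃ a b : ℕ, y = a * m + b * lam0}
          {y : ℤ | ∃ k' : ℕ, 1 ≤ k' ∧ k' ≤ eta m r lam k ∧
            y = (m : ℤ) * k - (k' : ℤ) * lam0}) ∧
      (∀ k1 k2 : ℕ, r ≤ k1 → k1 ≤ lam0 - 1 → r ≤ k2 → k2 ≤ lam0 - 1 → k1 ≠ k2 →
        Disjoint {y : ℤ | ∃ k' : ℕ, 1 ≤ k' ∧ k' ≤ eta m r lam k1 ∧
            y = (m : ℤ) * k1 - (k' : ℤ) * lam0}
          {y : ℤ | ∃ k' : ℕ, 1 ≤ k' ∧ k' ≤ eta m r lam k2 ∧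
            y = (m : ℤ) * k2 - (k' : ℤ) * lam0}) ∧
      (2 * Set.ncard {x : ℕ | ¬((∃ a b : ℕ, (x : ℤ) = a * m + b * lam0) ∨
          ∃ k : ℕ, r ≤ k ∧ k ≤ lam0 - 1 ∧ ∃ k' : ℕ, 1 ≤ k' ∧ k' ≤ eta m r lam k ∧
            (x : ℤ) = (m : ℤ) * k - (k' : ℤ) * lam0)} : ℤ) =
        ((m : ℤ) - 1) * ((r : ℤ) - 1) + r - ∑ i ∈ Finset.range r, (Nat.gcd m (lam i) : ℤ) := by
  have hl : 0 < lam0 := Nat.pos_of_ne_zero fun h => by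
    rw [h, Nat.gcd_zero_right] at hco
    omega
  have hr : 0 < r := Nat.pos_of_ne_zero fun h => by simp [h, h0] at hl
  have hlam' : ∀ i < r, 0 < lam i := fun i hi => (hlam i hi).1
  refine ⟨fun k _ hk => ?_, fun k₁ k₂ _ hk₁ _ hk₂ hne => ?_, ?_⟩
  · rw [Set.disjoint_left]
    rintro _ hy ⟨k', hk', -, rfl⟩
    have := (mul_sub_mul_mem_twoGenerated_iff hco (by omega : k < lam0)).mp hy
    omega
  · rw [Set.disjoint_left]
    rintro _ ⟨k', hk', -, rfl⟩ hy
    exact hne ((mul_sub_mul_mem_etaBlock_iff hco (by omega) (by omega)).mp hy).1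
  · rw [← two_mul_card_gapFinset (by omega) hr hlam' h0 hco, ← Set.ncard_coe_finset,
      coe_gapFinset hco hl]
    rfl

/-- The union ⟨m,λ₀⟩ ∪ ⋃_{k=r}^{λ₀-1} B_k is disjoint, and the cardinality of its
complement in ℕ₀ is ((m-1)(r-1) + r - ∑ gcd(m,λ_i))/2. -/
theorem stmt18 (m r : ℕ) (lam : ℕ → ℕ) (hm : 2 ≤ m) (hr : 2 ≤ r)
    (hlam : ∀ i, i < r → 1 ≤ lam i ∧ lam i < m) (lam0 : ℕ)
    (h0 : lam0 = ∑ i ∈ Finset.range r, lam i) (hco : Nat.gcd m lam0 = 1) (hrl : r < lam0) :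
    (∀ k : ℕ, r ≤ k → k ≤ lam0 - 1 →
        Disjoint {y : ℤ | ∃ a b : ℕ, y = a * m + b * lam0}
          {y : ℤ | ∃ k' : ℕ, 1 ≤ k' ∧ k' ≤ eta m r lam k ∧
            y = (m : ℤ) * k - (k' : ℤ) * lam0}) ∧
      (∀ k1 k2 : ℕ, r ≤ k1 → k1 ≤ lam0 - 1 → r ≤ k2 → k2 ≤ lam0 - 1 → k1 ≠ k2 →
        Disjoint {y : ℤ | ∃ k' : ℕ, 1 ≤ k' ∧ k' ≤ eta m r lam k1 ∧
            y = (m : ℤ) * k1 - (k' : ℤ) * lam0}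
          {y : ℤ | ∃ k' : ℕ, 1 ≤ k' ∧ k' ≤ eta m r lam k2 ∧
            y = (m : ℤ) * k2 - (k' : ℤ) * lam0}) ∧
      (2 * Set.ncard {x : ℕ | ¬((∃ a b : ℕ, (x : ℤ) = a * m + b * lam0) ∨
          ∃ k : ℕ, r ≤ k ∧ k ≤ lam0 - 1 ∧ ∃ k' : ℕ, 1 ≤ k' ∧ k' ≤ eta m r lam k ∧
            (x : ℤ) = (m : ℤ) * k - (k' : ℤ) * lam0)} : ℤ) =
        ((m : ℤ) - 1) * ((r : ℤ) - 1) + r - ∑ i ∈ Finset.range r, (Nat.gcd m (lam i) : ℤ) :=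
  stmt18_general m r lam hm hlam lam0 h0 hco
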